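/- arXiv:2010.08990 — 2 statements merged into one kernel-verified Lean document; each statement's English description precedes it below -/
import Mathlib

section
/- Fix an integer n ≥ 3 and p ∈ (0,1). Let θ* ∈ (0,1) be the unique zero of I_n(θ) = θ·log(1−θ) + n(θ + (1−θ)log(1−θ)) in (0,1), and set pˢ = h(θ*). Consider maximizing (1−k)θⁿ over pairs (k,θ) ∈ [0,1] × [0,1] satisfying k + (1−k)h(θ) = p. If p ≤ pˢ, the maximum is attained uniquely at k = 0 and θ = h⁻¹(p). If p > pˢ, the maximum is attained uniquely at θ = θ* and k = (p − pˢ)/(1 − pˢ), which is strictly positive. -/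
/-- `h(θ) = (1−θ)(1−log(1−θ))`, with `h 1 = 0` automatic since `Real.log 0 = 0`. -/
noncomputable def h (θ : ℝ) : ℝ := (1 - θ) * (1 - Real.log (1 - θ))

/-- `I_n(θ) = θ·log(1−θ) + n(θ + (1−θ)·log(1−θ))`. -/
noncomputable def I (n : ℕ) (θ : ℝ) : ℝ :=
  θ * Real.log (1 - θ) + n * (θ + (1 - θ) * Real.log (1 - θ))

/-! Along the constraint `(1 - k) (1 - h θ) = 1 - p`, the objective `(1 - k) θⁿ` equals
`(1 - p) θⁿ / (1 - h θ)`, and `k ≥ 0` is equivalent to `θ ≥ h⁻¹(p)`. Since `h' θ = log (1 - θ)`,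
the derivative of `θⁿ / (1 - h θ)` has the sign of `I_n θ`. For `n ≥ 3`, `I_n` is positive near `0`
and negative near `1`, so by the intermediate value theorem and uniqueness of its zero it is
positive on `(0, θ*)` and negative on `(θ*, 1)`. Hence `θⁿ / (1 - h θ)` peaks at `θ*`, and its
strict maximum over `[h⁻¹(p), 1]` is attained at `max (h⁻¹(p)) θ*`. -/

open Real Set

lemma IsPreconnected.pos_of_forall_ne_zero {X : Type*} [TopologicalSpace X] {f : X → ℝ}
    {s : Set X} (hs : IsPreconnected s) (hf : ContinuousOn f s) (hf0 : ∀ x ∈ s, f x ≠ 0)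
    {a : X} (ha : a ∈ s) (hfa : 0 < f a) {x : X} (hx : x ∈ s) : 0 < f x := by
  by_contra! hfx
  obtain ⟨y, hy, hfy⟩ := hs.intermediate_value hx ha hf ⟨hfx, hfa.le⟩
  exact hf0 y hy hfy

lemma continuous_h : Continuous h := by
  have : h = fun θ => (1 - θ) - (1 - θ) * log (1 - θ) := funext fun θ => by unfold h; ring
  rw [this]
  exact (continuous_const.sub continuous_id).sub
    (continuous_mul_log.comp (continuous_const.sub continuous_id))

lemma hasDerivAt_h {θ : ℝ} (hθ : θ < 1) : HasDerivAt h (log (1 - θ)) θ := by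
  have hsub : HasDerivAt (fun x : ℝ => 1 - x) (-1) θ := by
    simpa using (hasDerivAt_id θ).const_sub 1
  have hlog := hsub.log (by linarith)
  refine (hsub.mul (hlog.const_sub 1)).congr_deriv ?_
  field_simp [show (1 : ℝ) - θ ≠ 0 by linarith]
  ring

lemma h_zero : h 0 = 1 := by simp [h]

lemma strictAntiOn_h : StrictAntiOn h (Icc 0 1) := by
  refine strictAntiOn_of_deriv_neg (convex_Icc 0 1) continuous_h.continuousOn fun x hx => ?_
  rw [interior_Icc] at hx
  rw [(hasDerivAt_h hx.2).deriv]
  exact log_neg (by linarith [hx.2]) (by linarith [hx.1])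

lemma h_lt_one {θ : ℝ} (hθ : θ ∈ Ioc 0 1) : h θ < 1 :=
  h_zero ▸ strictAntiOn_h (left_mem_Icc.2 zero_le_one) (Ioc_subset_Icc_self hθ) hθ.1

lemma h_le_one {θ : ℝ} (hθ : θ ∈ Icc 0 1) : h θ ≤ 1 :=
  h_zero ▸ strictAntiOn_h.antitoneOn (left_mem_Icc.2 zero_le_one) hθ hθ.1

lemma I_eq (n : ℕ) (θ : ℝ) : I n θ = θ * log (1 - θ) + n * (1 - h θ) := by
  unfold I h; ring

lemma hasDerivAt_I (n : ℕ) {θ : ℝ} (hθ : θ < 1) :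
    HasDerivAt (I n) ((1 - n) * log (1 - θ) - θ / (1 - θ)) θ := by
  have hsub : HasDerivAt (fun x : ℝ => 1 - x) (-1) θ := by
    simpa using (hasDerivAt_id θ).const_sub 1
  have := ((hasDerivAt_id θ).mul (hsub.log (by linarith))).add
    (((hasDerivAt_h hθ).const_sub 1).const_mul (n : ℝ))
  rw [show I n = _ from funext (I_eq n)]
  refine this.congr_deriv ?_
  simp only [id]
  field_simp [show (1 : ℝ) - θ ≠ 0 by linarith]
  ring

lemma I_zero (n : ℕ) : I n 0 = 0 := by simp [I]

lemma I_pos_of_le_quarter {n : ℕ} (hn : 3 ≤ n) {θ : ℝ} (hθ : θ ∈ Ioc 0 (1 / 4)) :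
    0 < I n θ := by
  refine I_zero n ▸ strictMonoOn_of_deriv_pos (convex_Icc 0 (1 / 4))
    (fun x hx => (hasDerivAt_I n (by linarith [hx.2])).continuousAt.continuousWithinAt)
    (fun x hx => ?_) (left_mem_Icc.2 (by norm_num)) (Ioc_subset_Icc_self hθ) hθ.1
  rw [interior_Icc] at hx
  obtain ⟨hx0, hx4⟩ := hx
  rw [(hasDerivAt_I n (by linarith)).deriv]
  have hlog : log (1 - x) ≤ -x := by linarith [log_le_sub_one_of_pos (by linarith : 0 < 1 - x)]
  have hn' : (3 : ℝ) ≤ n := by exact_mod_cast hn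
  have hfrac : x / (1 - x) ≤ 4 / 3 * x := by
    rw [div_le_iff₀ (by linarith)]
    nlinarith
  nlinarith

lemma I_neg_of_log_lt {n : ℕ} {θ : ℝ} (hθ : θ ∈ Ico (1 / 2) 1) (hlog : log (1 - θ) < -(2 * n)) :
    I n θ < 0 := by
  obtain ⟨hθ2, hθ1⟩ := hθ
  have hn : (0 : ℝ) ≤ n := n.cast_nonneg
  have hlog0 : log (1 - θ) < 0 := by linarith
  have : (1 - θ) * log (1 - θ) ≤ 0 := mul_nonpos_of_nonneg_of_nonpos (by linarith) hlog0.le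
  unfold I
  nlinarith

lemma continuousOn_I (n : ℕ) : ContinuousOn (I n) (Iio 1) :=
  fun _ hx => (hasDerivAt_I n hx).continuousAt.continuousWithinAt

section SignOfI

variable {n : ℕ} {θs : ℝ}

lemma I_pos_of_lt (hn : 3 ≤ n) (hθs : θs ∈ Ioo 0 1)
    (huniq : ∀ θ ∈ Ioo (0 : ℝ) 1, I n θ = 0 → θ = θs) {θ : ℝ} (hθ : θ ∈ Ioo 0 θs) :
    0 < I n θ := by
  have ha : min (θs / 2) (1 / 4) ∈ Ioc (0 : ℝ) (1 / 4) :=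
    ⟨lt_min (by linarith [hθs.1]) (by norm_num), min_le_right _ _⟩
  refine isPreconnected_Ioo.pos_of_forall_ne_zero
    ((continuousOn_I n).mono fun x hx => hx.2.trans hθs.2)
    (fun x hx hx0 => hx.2.ne (huniq x ⟨hx.1, hx.2.trans hθs.2⟩ hx0))
    ⟨ha.1, (min_le_left _ _).trans_lt (by linarith [hθs.1])⟩ (I_pos_of_le_quarter hn ha) hθ

lemma I_neg_of_gt (hθs : θs ∈ Ioo 0 1)
    (huniq : ∀ θ ∈ Ioo (0 : ℝ) 1, I n θ = 0 → θ = θs) {θ : ℝ} (hθ : θ ∈ Ioo θs 1) :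
    I n θ < 0 := by
  set ε := min ((1 - θs) / 2) (exp (-(2 * n)) / 2)
  have hexp : exp (-(2 * n)) ≤ 1 := exp_le_one_iff.2 (by simp only [neg_nonpos]; positivity)
  have hε : 0 < ε := lt_min (by linarith [hθs.2]) (by positivity)
  have hεs : ε < 1 - θs := (min_le_left _ _).trans_lt (by linarith [hθs.2])
  have hεexp : ε < exp (-(2 * n)) := (min_le_right _ _).trans_lt (by linarith [exp_pos (-(2 * n))])
  have hlog : log (1 - (1 - ε)) < -(2 * n) := by
    rw [sub_sub_cancel, ← log_exp (-(2 * n))]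
    exact log_lt_log hε hεexp
  have hIε : I n (1 - ε) < 0 :=
    I_neg_of_log_lt ⟨by linarith [min_le_right ((1 - θs) / 2) (exp (-(2 * n)) / 2)], by linarith⟩
      hlog
  refine neg_pos.1 (isPreconnected_Ioo.pos_of_forall_ne_zero (f := fun θ => -I n θ)
    ((continuousOn_I n).neg.mono fun x hx => hx.2)
    (fun x hx hx0 => hx.1.ne' (huniq x ⟨hθs.1.trans hx.1, hx.2⟩ (neg_eq_zero.1 hx0)))
    ⟨by linarith, by linarith⟩ (neg_pos.2 hIε) hθ)

end SignOfI

noncomputable def reducedObjective (n : ℕ) (θ : ℝ) : ℝ := θ ^ n / (1 - h θ)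

-- `θ ^ n / θ` rather than `θ ^ (n - 1)`, so that the formula also holds for `n = 0`.
lemma hasDerivAt_reducedObjective (n : ℕ) {θ : ℝ} (hθ : θ ∈ Ioo 0 1) :
    HasDerivAt (reducedObjective n) (θ ^ n * I n θ / (θ * (1 - h θ) ^ 2)) θ := by
  have hh : 1 - h θ ≠ 0 := (sub_pos.2 (h_lt_one (Ioo_subset_Ioc_self hθ))).ne'
  refine ((hasDerivAt_pow n θ).div ((hasDerivAt_h hθ.2).const_sub 1) hh).congr_deriv ?_
  rw [I_eq]
  rcases n with _ | n
  · field_simp [hθ.1.ne']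
    ring
  · field_simp [hθ.1.ne']
    push_cast
    ring

lemma continuousOn_reducedObjective (n : ℕ) : ContinuousOn (reducedObjective n) (Ioc 0 1) :=
  (continuous_pow n).continuousOn.div (continuousOn_const.sub continuous_h.continuousOn)
    fun _ hθ => (sub_pos.2 (h_lt_one hθ)).ne'

section Monotonicity

variable {n : ℕ} {θs : ℝ}

lemma strictMonoOn_reducedObjective (hn : 3 ≤ n) (hθs : θs ∈ Ioo 0 1)
    (huniq : ∀ θ ∈ Ioo (0 : ℝ) 1, I n θ = 0 → θ = θs) :
    StrictMonoOn (reducedObjective n) (Ioc 0 θs) := by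
  refine strictMonoOn_of_deriv_pos (convex_Ioc 0 θs)
    ((continuousOn_reducedObjective n).mono (Ioc_subset_Ioc_right hθs.2.le)) fun x hx => ?_
  rw [interior_Ioc] at hx
  have hx1 : x ∈ Ioo 0 1 := ⟨hx.1, hx.2.trans hθs.2⟩
  rw [(hasDerivAt_reducedObjective n hx1).deriv]
  have hh : 0 < 1 - h x := sub_pos.2 (h_lt_one (Ioo_subset_Ioc_self hx1))
  exact div_pos (mul_pos (pow_pos hx1.1 n) (I_pos_of_lt hn hθs huniq hx))
    (mul_pos hx1.1 (pow_pos hh 2))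

lemma strictAntiOn_reducedObjective (hθs : θs ∈ Ioo 0 1)
    (huniq : ∀ θ ∈ Ioo (0 : ℝ) 1, I n θ = 0 → θ = θs) :
    StrictAntiOn (reducedObjective n) (Icc θs 1) := by
  refine strictAntiOn_of_deriv_neg (convex_Icc θs 1)
    ((continuousOn_reducedObjective n).mono fun x hx => ⟨hθs.1.trans_le hx.1, hx.2⟩)
    fun x hx => ?_
  rw [interior_Icc] at hx
  have hx1 : x ∈ Ioo 0 1 := ⟨hθs.1.trans hx.1, hx.2⟩
  rw [(hasDerivAt_reducedObjective n hx1).deriv]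
  have hh : 0 < 1 - h x := sub_pos.2 (h_lt_one (Ioo_subset_Ioc_self hx1))
  exact div_neg_of_neg_of_pos
    (mul_neg_of_pos_of_neg (pow_pos hx1.1 n) (I_neg_of_gt hθs huniq hx))
    (mul_pos hx1.1 (pow_pos hh 2))

end Monotonicity

section Constraint

variable {n : ℕ} {p k θ : ℝ}

lemma mul_pow_eq_of_constraint (hθ : θ ∈ Ioc 0 1) (hcon : k + (1 - k) * h θ = p) :
    (1 - k) * θ ^ n = (1 - p) * reducedObjective n θ := by
  have hh : 1 - h θ ≠ 0 := (sub_pos.2 (h_lt_one hθ)).ne'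
  rw [show 1 - p = (1 - k) * (1 - h θ) by linear_combination hcon, reducedObjective]
  field_simp

lemma eq_div_of_constraint (hθ : θ ∈ Ioc 0 1) (hcon : k + (1 - k) * h θ = p) :
    k = (p - h θ) / (1 - h θ) := by
  have hh : 1 - h θ ≠ 0 := (sub_pos.2 (h_lt_one hθ)).ne'
  field_simp
  linear_combination hcon

lemma le_of_constraint {θp : ℝ} (hk : 0 ≤ k) (hθ : θ ∈ Icc 0 1) (hθp : θp ∈ Icc 0 1)
    (hθph : h θp = p) (hcon : k + (1 - k) * h θ = p) : θp ≤ θ := by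
  have : h θ ≤ h θp := by nlinarith [h_le_one hθ]
  exact (strictAntiOn_h.le_iff_ge hθ hθp).1 this

lemma constrained_max_of_reducedObjective_lt {θp θ₀ : ℝ} (hp : p < 1) (hθp : θp ∈ Ioc 0 1)
    (hθph : h θp = p) (hθ₀ : θ₀ ∈ Ioc 0 1)
    (hmax : ∀ θ ∈ Icc θp 1, θ ≠ θ₀ → reducedObjective n θ < reducedObjective n θ₀)
    (hk : k ∈ Icc 0 1) (hθ : θ ∈ Icc 0 1) (hcon : k + (1 - k) * h θ = p) :
    (1 - k) * θ ^ n ≤ (1 - (p - h θ₀) / (1 - h θ₀)) * θ₀ ^ n ∧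
      ((k, θ) ≠ ((p - h θ₀) / (1 - h θ₀), θ₀) →
        (1 - k) * θ ^ n < (1 - (p - h θ₀) / (1 - h θ₀)) * θ₀ ^ n) := by
  have hθpθ : θp ≤ θ := le_of_constraint hk.1 hθ (Ioc_subset_Icc_self hθp) hθph hcon
  have hθ' : θ ∈ Ioc 0 1 := ⟨hθp.1.trans_le hθpθ, hθ.2⟩
  have hcon₀ : (p - h θ₀) / (1 - h θ₀) + (1 - (p - h θ₀) / (1 - h θ₀)) * h θ₀ = p := by
    have hh : 1 - h θ₀ ≠ 0 := (sub_pos.2 (h_lt_one hθ₀)).ne'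
    field_simp
    ring
  rw [mul_pow_eq_of_constraint hθ' hcon, mul_pow_eq_of_constraint hθ₀ hcon₀]
  have hlt : θ ≠ θ₀ → (1 - p) * reducedObjective n θ < (1 - p) * reducedObjective n θ₀ :=
    fun hne => mul_lt_mul_of_pos_left (hmax θ ⟨hθpθ, hθ.2⟩ hne) (sub_pos.2 hp)
  rcases eq_or_ne θ θ₀ with rfl | hne
  · refine ⟨le_rfl, fun hne => absurd ?_ hne⟩
    rw [← eq_div_of_constraint hθ' hcon]
  · exact ⟨(hlt hne).le, fun _ => hlt hne⟩

end Constraint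

theorem stmt2_general (n : ℕ) (hn : 3 ≤ n) (p : ℝ) (hp : p ∈ Set.Ioo (0:ℝ) 1)
    (θstar : ℝ) (hθstar : θstar ∈ Set.Ioo (0:ℝ) 1)
    (huniq : ∀ θ ∈ Set.Ioo (0:ℝ) 1, I n θ = 0 → θ = θstar)
    (θp : ℝ) (hθp : θp ∈ Set.Icc (0:ℝ) 1) (hθph : h θp = p) :
    (p ≤ h θstar →
      ∀ k ∈ Set.Icc (0:ℝ) 1, ∀ θ ∈ Set.Icc (0:ℝ) 1,
        k + (1 - k) * h θ = p →
        (1 - k) * θ ^ n ≤ (1 - 0) * θp ^ n ∧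
        ((k, θ) ≠ (0, θp) → (1 - k) * θ ^ n < θp ^ n)) ∧
    (h θstar < p →
      0 < (p - h θstar) / (1 - h θstar) ∧
      ∀ k ∈ Set.Icc (0:ℝ) 1, ∀ θ ∈ Set.Icc (0:ℝ) 1,
        k + (1 - k) * h θ = p →
        (1 - k) * θ ^ n ≤ (1 - (p - h θstar) / (1 - h θstar)) * θstar ^ n ∧
        ((k, θ) ≠ ((p - h θstar) / (1 - h θstar), θstar) →
          (1 - k) * θ ^ n < (1 - (p - h θstar) / (1 - h θstar)) * θstar ^ n)) := by
  have hθp' : θp ∈ Ioc 0 1 :=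
    ⟨hθp.1.lt_of_ne fun h0 => by rw [← h0, h_zero] at hθph; linarith [hp.2], hθp.2⟩
  have hθstar' : θstar ∈ Icc 0 1 := Ioo_subset_Icc_self hθstar
  have hanti := strictAntiOn_reducedObjective hθstar huniq
  refine ⟨fun hle k hk θ hθ hcon => ?_, fun hlt => ⟨?_, fun k hk θ hθ hcon => ?_⟩⟩
  · have hsp : θstar ≤ θp := (strictAntiOn_h.le_iff_ge hθp hθstar').1 (hθph ▸ hle)
    have := constrained_max_of_reducedObjective_lt hp.2 hθp' hθph hθp'
      (fun θ hθ hne => hanti ⟨hsp, hθp.2⟩ ⟨hsp.trans hθ.1, hθ.2⟩ (hθ.1.lt_of_ne' hne)) hk hθ hcon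
    rw [hθph, sub_self, zero_div] at this
    exact ⟨this.1, fun hne => by simpa only [sub_zero, one_mul] using this.2 hne⟩
  · exact div_pos (sub_pos.2 hlt) (sub_pos.2 (h_lt_one (Ioo_subset_Ioc_self hθstar)))
  · refine constrained_max_of_reducedObjective_lt hp.2 hθp' hθph (Ioo_subset_Ioc_self hθstar)
      (fun θ hθ hne => ?_) hk hθ hcon
    rcases hne.lt_or_gt with hθs | hθs
    · exact strictMonoOn_reducedObjective hn hθstar huniq ⟨hθp'.1.trans_le hθ.1, hθs.le⟩
        ⟨hθstar.1, le_rfl⟩ hθs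
    · exact hanti ⟨le_rfl, hθstar.2.le⟩ ⟨hθs.le, hθ.2⟩ hθs

/-- seller-worst reduced problem for `n ≥ 3` buyers.  With `θ*` the
unique zero of `I_n` in `(0,1)` and `pˢ = h(θ*)`: if `p ≤ pˢ` the maximum of
`(1−k)θⁿ` subject to `k + (1−k)h(θ) = p` is attained uniquely at `(0, h⁻¹(p))`;
if `p > pˢ` it is attained uniquely at `θ = θ*`, `k = (p−pˢ)/(1−pˢ) > 0`. -/
theorem stmt2 (n : ℕ) (hn : 3 ≤ n) (p : ℝ) (hp : p ∈ Set.Ioo (0:ℝ) 1)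
    (θstar : ℝ) (hθstar : θstar ∈ Set.Ioo (0:ℝ) 1)
    (hzero : I n θstar = 0)
    (huniq : ∀ θ ∈ Set.Ioo (0:ℝ) 1, I n θ = 0 → θ = θstar)
    (θp : ℝ) (hθp : θp ∈ Set.Icc (0:ℝ) 1) (hθph : h θp = p) :
    (p ≤ h θstar →
      ∀ k ∈ Set.Icc (0:ℝ) 1, ∀ θ ∈ Set.Icc (0:ℝ) 1,
        k + (1 - k) * h θ = p →
        (1 - k) * θ ^ n ≤ (1 - 0) * θp ^ n ∧
        ((k, θ) ≠ (0, θp) → (1 - k) * θ ^ n < θp ^ n)) ∧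
    (h θstar < p →
      0 < (p - h θstar) / (1 - h θstar) ∧
      ∀ k ∈ Set.Icc (0:ℝ) 1, ∀ θ ∈ Set.Icc (0:ℝ) 1,
        k + (1 - k) * h θ = p →
        (1 - k) * θ ^ n ≤ (1 - (p - h θstar) / (1 - h θstar)) * θstar ^ n ∧
        ((k, θ) ≠ ((p - h θstar) / (1 - h θstar), θstar) →
          (1 - k) * θ ^ n < (1 - (p - h θstar) / (1 - h θstar)) * θstar ^ n)) :=
  stmt2_general n hn p hp θstar hθstar huniq θp hθp hθph
end

section
/- Fix an integer n ≥ 2 and define ℓ₁(θ) = θⁿ⁻¹ + ∑_{i=1}^{n−1} θⁱ/i + log(1−θ) for θ ∈ (0,1). Then ℓ₁ has exactly one zero θ₁ in (0,1); moreover ℓ₁(θ) > 0 for θ ∈ (0,θ₁), ℓ₁(θ) < 0 for θ ∈ (θ₁,1), and θ₁ > (n−1)/n. -/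
/-!
Writing `n = k + 1`, the derivative of `ℓ₁` is `θ^(k-1) (k - (k+1) θ) / (1 - θ)`, so `ℓ₁` increases
on `[0, k/(k+1)]` starting from `ℓ₁(0) = 0`, and decreases on `[k/(k+1), 1)` to `-∞` because of the
logarithm. Hence it vanishes exactly once in `(0, 1)`, to the right of `k/(k+1) = (n-1)/n`.
-/

/-- `ℓ₁(θ) = θⁿ⁻¹ + ∑_{i=1}^{n−1} θⁱ/i + log(1−θ)`. -/
noncomputable def ell1 (n : ℕ) (θ : ℝ) : ℝ :=
  θ ^ (n - 1) + (∑ i ∈ Finset.Icc 1 (n - 1), θ ^ i / (i : ℝ)) + Real.log (1 - θ)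

open Real Set Filter Topology

theorem exists_zero_of_strictMonoOn_of_strictAntiOn {f : ℝ → ℝ} {a m b : ℝ}
    (ham : a < m) (hmb : m < b) (hmono : StrictMonoOn f (Icc a m))
    (hanti : StrictAntiOn f (Ico m b)) (hcont : ContinuousOn f (Ico m b)) (ha : 0 ≤ f a)
    (hb : Tendsto f (𝓝[<] b) atBot) :
    ∃ c ∈ Ioo m b, f c = 0 ∧ (∀ x ∈ Ioo a c, 0 < f x) ∧ ∀ x ∈ Ioo c b, f x < 0 := by
  have hm : 0 < f m := ha.trans_lt <| hmono (left_mem_Icc.2 ham.le) (right_mem_Icc.2 ham.le) ham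
  obtain ⟨b', hb'neg, hb'⟩ : ∃ b', f b' < 0 ∧ b' ∈ Ioo m b :=
    ((hb.eventually (eventually_lt_atBot 0)).and (Ioo_mem_nhdsLT hmb)).exists
  obtain ⟨c, hc, hfc⟩ : ∃ c ∈ Ioo m b', f c = 0 :=
    intermediate_value_Ioo' hb'.1.le (hcont.mono (Icc_subset_Ico_right hb'.2)) ⟨hb'neg, hm⟩
  have hcb : c ∈ Ico m b := ⟨hc.1.le, hc.2.trans hb'.2⟩
  refine ⟨c, ⟨hc.1, hcb.2⟩, hfc, fun x hx => ?_, fun x hx => ?_⟩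
  · rcases le_or_gt x m with hxm | hmx
    · exact ha.trans_lt <| hmono (left_mem_Icc.2 ham.le) ⟨hx.1.le, hxm⟩ hx.1
    · exact hfc ▸ hanti ⟨hmx.le, hx.2.trans hcb.2⟩ hcb hx.2
  · exact hfc ▸ hanti hcb ⟨hcb.1.trans hx.1.le, hx.2⟩ hx.1

theorem sum_Icc_pow_pred_mul_one_sub (k : ℕ) (θ : ℝ) :
    (∑ i ∈ Finset.Icc 1 k, θ ^ (i - 1)) * (1 - θ) = 1 - θ ^ k := by
  induction k with
  | zero => simp
  | succ k ih =>
    rw [Finset.sum_Icc_succ_top (by omega), add_mul, ih, Nat.add_sub_cancel]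
    ring

theorem hasDerivAt_ell1_succ {k : ℕ} (hk : 0 < k) {θ : ℝ} (hθ : θ < 1) :
    HasDerivAt (ell1 (k + 1)) (θ ^ (k - 1) * (k - (k + 1) * θ) / (1 - θ)) θ := by
  have hθ' : 1 - θ ≠ 0 := by linarith
  have hsum : HasDerivAt (fun x : ℝ => ∑ i ∈ Finset.Icc 1 k, x ^ i / (i : ℝ))
      (∑ i ∈ Finset.Icc 1 k, θ ^ (i - 1)) θ := by
    refine HasDerivAt.fun_sum fun i hi => ?_
    have hi : (i : ℝ) ≠ 0 := by have := (Finset.mem_Icc.1 hi).1; positivity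
    simpa [hi] using (hasDerivAt_pow i θ).div_const (i : ℝ)
  have hlog : HasDerivAt (fun x : ℝ => log (1 - x)) (-1 / (1 - θ)) θ := by
    simpa using ((hasDerivAt_id θ).const_sub 1).log hθ'
  have hpow : θ ^ (k - 1) * θ = θ ^ k := by rw [← pow_succ, Nat.sub_add_cancel hk]
  have hell : ell1 (k + 1) =
      fun x => x ^ k + ∑ i ∈ Finset.Icc 1 k, x ^ i / (i : ℝ) + log (1 - x) := by
    ext x; simp [ell1]
  rw [hell]
  refine (((hasDerivAt_pow k θ).fun_add hsum).fun_add hlog).congr_deriv ?_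
  rw [eq_div_iff hθ', add_mul, add_mul, div_mul_cancel₀ _ hθ', sum_Icc_pow_pred_mul_one_sub]
  linear_combination hpow

theorem continuousOn_ell1 (n : ℕ) : ContinuousOn (ell1 n) (Iio 1) :=
  ContinuousOn.add (by fun_prop) <|
    ContinuousOn.log (by fun_prop) fun _ hx => sub_ne_zero.2 (ne_of_gt hx)

theorem tendsto_ell1_nhdsLT_one (n : ℕ) : Tendsto (ell1 n) (𝓝[<] 1) atBot := by
  have hpoly : Continuous fun θ : ℝ =>
      θ ^ (n - 1) + ∑ i ∈ Finset.Icc 1 (n - 1), θ ^ i / (i : ℝ) := by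
    fun_prop
  have hsub : Tendsto (fun θ : ℝ => 1 - θ) (𝓝[<] 1) (𝓝[>] 0) := by
    refine tendsto_nhdsWithin_iff.2
      ⟨?_, eventually_nhdsWithin_of_forall fun _ hθ => sub_pos.2 (mem_Iio.1 hθ)⟩
    exact ((continuous_sub_left 1).tendsto' 1 0 (sub_self 1)).mono_left nhdsWithin_le_nhds
  exact ((hpoly.tendsto 1).mono_left nhdsWithin_le_nhds).add_atBot
    (tendsto_log_nhdsGT_zero.comp hsub)

theorem ell1_succ_zero {k : ℕ} (hk : k ≠ 0) : ell1 (k + 1) 0 = 0 := by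
  simp only [ell1, Nat.add_sub_cancel, zero_pow hk, sub_zero, log_one, add_zero, zero_add]
  exact Finset.sum_eq_zero fun i hi => by simp [Nat.one_le_iff_ne_zero.1 (Finset.mem_Icc.1 hi).1]

theorem strictMonoOn_ell1_succ {k : ℕ} (hk : 0 < k) :
    StrictMonoOn (ell1 (k + 1)) (Icc 0 (k / (k + 1))) := by
  have hm : (k : ℝ) / (k + 1) < 1 := (div_lt_one (by positivity)).2 (lt_add_one _)
  refine strictMonoOn_of_deriv_pos (convex_Icc _ _)
    ((continuousOn_ell1 _).mono fun x hx => hx.2.trans_lt hm) fun x hx => ?_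
  rw [interior_Icc] at hx
  have hx' : (k + 1) * x < k := (lt_div_iff₀' (by positivity)).1 hx.2
  rw [(hasDerivAt_ell1_succ hk (hx.2.trans hm)).deriv]
  exact div_pos (mul_pos (pow_pos hx.1 _) (sub_pos.2 hx')) (sub_pos.2 (hx.2.trans hm))

theorem strictAntiOn_ell1_succ {k : ℕ} (hk : 0 < k) :
    StrictAntiOn (ell1 (k + 1)) (Ico (k / (k + 1)) 1) := by
  refine strictAntiOn_of_deriv_neg (convex_Ico _ _)
    ((continuousOn_ell1 _).mono fun x hx => hx.2) fun x hx => ?_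
  rw [interior_Ico] at hx
  have hx' : k < (k + 1) * x := (div_lt_iff₀' (by positivity)).1 hx.1
  have hx0 : 0 < x := hx.1.trans_le' (by positivity)
  rw [(hasDerivAt_ell1_succ hk hx.2).deriv]
  exact div_neg_of_neg_of_pos (mul_neg_of_pos_of_neg (pow_pos hx0 _) (sub_neg.2 hx'))
    (sub_pos.2 hx.2)

/-- for `n ≥ 2`, `ℓ₁` has exactly one zero `θ₁` in `(0,1)`;
`ℓ₁ > 0` on `(0,θ₁)`, `ℓ₁ < 0` on `(θ₁,1)`, and `θ₁ > (n−1)/n`. -/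
theorem stmt7 (n : ℕ) (hn : 2 ≤ n) :
    ∃ θ1 ∈ Set.Ioo (0:ℝ) 1,
      ell1 n θ1 = 0 ∧
      (∀ θ ∈ Set.Ioo (0:ℝ) 1, ell1 n θ = 0 → θ = θ1) ∧
      (∀ θ ∈ Set.Ioo (0:ℝ) θ1, 0 < ell1 n θ) ∧
      (∀ θ ∈ Set.Ioo θ1 (1:ℝ), ell1 n θ < 0) ∧
      ((n:ℝ) - 1) / (n:ℝ) < θ1 := by
  obtain ⟨k, rfl⟩ : ∃ k, n = k + 1 := ⟨n - 1, by omega⟩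
  have hk : 0 < k := by omega
  have hm : (0 : ℝ) < k / (k + 1) := by positivity
  obtain ⟨θ1, ⟨hmθ, hθ1⟩, hzero, hpos, hneg⟩ :=
    exists_zero_of_strictMonoOn_of_strictAntiOn hm ((div_lt_one (by positivity)).2 (lt_add_one _))
      (strictMonoOn_ell1_succ hk) (strictAntiOn_ell1_succ hk)
      ((continuousOn_ell1 _).mono fun _ hx => hx.2)
      (ell1_succ_zero hk.ne').ge (tendsto_ell1_nhdsLT_one _)
  refine ⟨θ1, ⟨hm.trans hmθ, hθ1⟩, hzero, fun θ hθ hθzero => ?_, hpos, hneg, by simpa using hmθ⟩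
  rcases lt_trichotomy θ θ1 with h | h | h
  · exact absurd hθzero (hpos θ ⟨hθ.1, h⟩).ne'
  · exact h
  · exact absurd hθzero (hneg θ ⟨h, hθ.2⟩).ne
end
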